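/- The pure 2-dimensional simplicial complex P(2) on vertex set {1,...,6} with 2-faces [1,2,6], [1,3,6], [2,4,6], [3,5,6], [2,3,4], [2,3,5], [1,3,4], [1,4,5], [1,2,5] has first homology group with ℤ coefficients isomorphic to ℤ. -/

import Mathlib

/-- A (labeled abstract) simplicial complex on vertex set `Fin n`: a collection of
nonempty finite sets closed under taking nonempty subsets. -/
def IsComplex {n : ℕ} (X : Finset (Finset (Fin n))) : Prop :=
  (∀ σ ∈ X, σ.Nonempty) ∧ ∀ σ ∈ X, ∀ τ, τ ⊆ σ → τ.Nonempty → τ ∈ X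

/-- The `i`-dimensional faces of `X` (sets of `i + 1` vertices). -/
def Face {n : ℕ} (X : Finset (Finset (Fin n))) (i : ℕ) :=
  {σ : Finset (Fin n) // σ ∈ X ∧ σ.card = i + 1}

/-- Simplicial `i`-chains with integer coefficients. -/
abbrev Chain {n : ℕ} (X : Finset (Finset (Fin n))) (i : ℕ) := Face X i →₀ ℤ

/-- The simplicial boundary map `∂ : C_{i+1} → C_i`. -/
noncomputable def boundary {n : ℕ} (X : Finset (Finset (Fin n))) (i : ℕ) :
    Chain X (i + 1) →ₗ[ℤ] Chain X i :=
  Finsupp.lsum ℤ fun σ => LinearMap.toSpanSingleton ℤ _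
    (∑ v ∈ σ.1.attach,
      if h : σ.1.erase v.1 ∈ X then
        ((-1 : ℤ) ^ ((σ.1.filter (· < v.1)).card)) •
          Finsupp.single (⟨σ.1.erase v.1, h, by
            rw [Finset.card_erase_of_mem v.2, σ.2.2]; omega⟩ : Face X i) 1
      else 0)

/-- The submodule of `i`-cycles. -/
noncomputable def cycles {n : ℕ} (X : Finset (Finset (Fin n))) : (i : ℕ) → Submodule ℤ (Chain X i)
  | 0 => ⊤
  | (j + 1) => LinearMap.ker (boundary X j)

/-- The submodule of `i`-boundaries. -/
noncomputable def boundaries {n : ℕ} (X : Finset (Finset (Fin n))) (i : ℕ) :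
    Submodule ℤ (Chain X i) :=
  LinearMap.range (boundary X i)

/-- The `i`-th simplicial homology group of `X` with `ℤ` coefficients. -/
noncomputable def Homology {n : ℕ} (X : Finset (Finset (Fin n))) (i : ℕ) :=
  cycles X i ⧸ Submodule.comap (cycles X i).subtype (boundaries X i)

noncomputable instance {n : ℕ} (X : Finset (Finset (Fin n))) (i : ℕ) :
    AddCommGroup (Homology X i) := by unfold Homology; infer_instance

noncomputable instance {n : ℕ} (X : Finset (Finset (Fin n))) (i : ℕ) :
    Module ℤ (Homology X i) := by unfold Homology; infer_instance

/-- The nine 2-dimensional faces of `P(2)` (the punctured 6-vertex triangulation of the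
real projective plane), on vertex set `{0, …, 5}` (relabeling `{1, …, 6}`). -/
def P2triangles : Finset (Finset (Fin 6)) :=
  {{0, 1, 5}, {0, 2, 5}, {1, 3, 5}, {2, 4, 5}, {1, 2, 3}, {1, 2, 4}, {0, 2, 3},
    {0, 3, 4}, {0, 1, 4}}

/-- The complex `P(2)`: all nonempty subsets of the nine triangles. -/
def P2 : Finset (Finset (Fin 6)) :=
  Finset.univ.filter fun σ => σ.Nonempty ∧ ∃ τ ∈ P2triangles, σ ⊆ τ

/-!
The star of vertex `0` is a spanning tree of `P(2)`, so every edge `e` closes a fundamental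
cycle `z_e`. The cochain `φ` (`P2.dualCocycle`) vanishes on boundaries and takes the value `1`
on the triangle loop `g = [0,4] + [4,5] - [0,5]` (`P2.generator`), and each `z_e - φ(e) g`
bounds an explicit 2-chain. Hence `∂Ψ + H∂ + g φ = 1` on 1-chains, which says that a cycle
killed by `φ` is a boundary, and `φ` induces `H_1 ≅ ℤ`.
-/

open Matrix

noncomputable def Submodule.quotComapSubtypeEquivOfFunctional {R M : Type*} [CommRing R]
    [AddCommGroup M] [Module R M] (Z B : Submodule R M) (φ : M →ₗ[R] R)
    (hB : B ≤ LinearMap.ker φ) (hZ : Z ⊓ LinearMap.ker φ ≤ B) {g : M} (hg : g ∈ Z)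
    (hφg : φ g = 1) : (Z ⧸ B.comap Z.subtype) ≃ₗ[R] R :=
  have hker : B.comap Z.subtype = LinearMap.ker (φ ∘ₗ Z.subtype) := by
    ext z
    exact ⟨fun hz => hB hz, fun hz => hZ ⟨z.2, hz⟩⟩
  have hsurj : Function.Surjective (φ ∘ₗ Z.subtype) := fun r =>
    ⟨r • ⟨g, hg⟩, by simp [hφg]⟩
  (Submodule.quotEquivOfEq _ _ hker).trans ((φ ∘ₗ Z.subtype).quotKerEquivOfSurjective hsurj)

section

variable {n : ℕ} {X : Finset (Finset (Fin n))}

instance (X : Finset (Finset (Fin n))) (i : ℕ) : DecidableEq (Face X i) := by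
  unfold Face; infer_instance

instance (X : Finset (Finset (Fin n))) (i : ℕ) : Fintype (Face X i) := by
  unfold Face; infer_instance

def incidence (σ τ : Finset (Fin n)) : ℤ :=
  ∑ v ∈ σ, if σ.erase v = τ then (-1) ^ (σ.filter (· < v)).card else 0

variable (X) in
def boundaryMatrix (i : ℕ) : Matrix (Face X i) (Face X (i + 1)) ℤ :=
  fun τ σ => incidence σ.1 τ.1

theorem boundary_single_apply {i : ℕ} (σ : Face X (i + 1)) (τ : Face X i) :
    boundary X i (Finsupp.single σ 1) τ = incidence σ.1 τ.1 := by
  rw [boundary, Finsupp.lsum_single, LinearMap.toSpanSingleton_apply, one_smul,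
    Finset.sum_apply', incidence, ← Finset.sum_attach σ.1]
  refine Finset.sum_congr rfl fun v _ => ?_
  classical
  split_ifs with hX hτ hτ
  · erw [Finsupp.smul_apply, Finsupp.single_apply, if_pos (Subtype.ext hτ), smul_eq_mul,
      mul_one]
  · erw [Finsupp.smul_apply, Finsupp.single_apply, if_neg (hτ ∘ congrArg Subtype.val),
      smul_zero]
  · exact absurd (hτ ▸ τ.2.1) hX
  · rfl

theorem coe_boundary {i : ℕ} (c : Chain X (i + 1)) :
    ⇑(boundary X i c) = boundaryMatrix X i *ᵥ ⇑c := by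
  induction c using Finsupp.induction_linear with
  | zero => simp
  | add c d hc hd => simp [hc, hd, mulVec_add]
  | single σ r =>
    ext τ
    rw [Finsupp.single_eq_pi_single, mulVec_single, ← Finsupp.smul_single_one, map_smul]
    simp [boundary_single_apply, boundaryMatrix, mul_comm]

theorem nonempty_homology_succ_equiv_int_of_homotopy {i : ℕ}
    (Ψ : Matrix (Face X (i + 2)) (Face X (i + 1)) ℤ) (H : Matrix (Face X (i + 1)) (Face X i) ℤ)
    (φ g : Face X (i + 1) → ℤ)
    (hφ : φ ᵥ* boundaryMatrix X (i + 1) = 0) (hg : boundaryMatrix X i *ᵥ g = 0)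
    (hφg : φ ⬝ᵥ g = 1)
    (hid : boundaryMatrix X (i + 1) * Ψ + H * boundaryMatrix X i + vecMulVec g φ = 1) :
    Nonempty (Homology X (i + 1) ≃ₗ[ℤ] ℤ) := by
  let F : Chain X (i + 1) →ₗ[ℤ] ℤ :=
    dotProductBilin ℤ ℤ φ ∘ₗ (Finsupp.linearEquivFunOnFinite ℤ ℤ _).toLinearMap
  have hF (c : Chain X (i + 1)) : F c = φ ⬝ᵥ ⇑c := rfl
  have mem_cycles (c : Chain X (i + 1)) :
      c ∈ cycles X (i + 1) ↔ boundaryMatrix X i *ᵥ ⇑c = 0 := by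
    rw [← coe_boundary, ← Finsupp.coe_zero, DFunLike.coe_fn_eq]
    exact LinearMap.mem_ker
  have hB : boundaries X (i + 1) ≤ LinearMap.ker F := by
    rintro _ ⟨c, rfl⟩
    rw [LinearMap.mem_ker, hF, coe_boundary, dotProduct_mulVec, hφ, zero_dotProduct]
  have hZ : cycles X (i + 1) ⊓ LinearMap.ker F ≤ boundaries X (i + 1) := by
    rintro c ⟨hc : c ∈ cycles X (i + 1), hFc : c ∈ LinearMap.ker F⟩
    rw [mem_cycles] at hc
    rw [LinearMap.mem_ker, hF] at hFc
    refine ⟨Finsupp.equivFunOnFinite.symm (Ψ *ᵥ ⇑c), DFunLike.coe_injective ?_⟩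
    calc ⇑(boundary X (i + 1) (Finsupp.equivFunOnFinite.symm (Ψ *ᵥ ⇑c)))
        = (boundaryMatrix X (i + 1) * Ψ) *ᵥ ⇑c := by
          rw [coe_boundary, Finsupp.coe_equivFunOnFinite_symm, mulVec_mulVec]
      _ = (1 - H * boundaryMatrix X i - vecMulVec g φ) *ᵥ ⇑c := by
          rw [← hid]; abel_nf
      _ = ⇑c := by
          rw [sub_mulVec, sub_mulVec, one_mulVec, ← mulVec_mulVec, hc, vecMulVec_mulVec, hFc]
          simp only [mulVec_zero, sub_zero, MulOpposite.op_zero, zero_smul]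
  have hgZ : Finsupp.equivFunOnFinite.symm g ∈ cycles X (i + 1) := by
    rw [mem_cycles, Finsupp.coe_equivFunOnFinite_symm, hg]
  exact ⟨Submodule.quotComapSubtypeEquivOfFunctional _ _ F hB hZ hgZ
    (by rw [hF, Finsupp.coe_equivFunOnFinite_symm, hφg])⟩

end

def signedIndicator {α : Type*} [DecidableEq α] (pos neg : Finset α) (a : α) : ℤ :=
  (if a ∈ pos then 1 else 0) - (if a ∈ neg then 1 else 0)

namespace P2

/-- Row `e` is the 2-chain with boundary `z_e - φ(e) g`; for the edges not listed, whose cone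
`insert 0 e` is a triangle, that triangle does it. -/
def fillingCoeff (e t : Finset (Fin 6)) : ℤ :=
  if e = {1, 2} then signedIndicator {{1, 2, 4}, {0, 1, 4}} {{0, 2, 5}, {2, 4, 5}} t
  else if e = {1, 3} then
    signedIndicator {{1, 2, 4}, {0, 2, 3}, {0, 1, 4}} {{0, 2, 5}, {2, 4, 5}, {1, 2, 3}} t
  else if e = {2, 4} then signedIndicator {{0, 2, 5}, {2, 4, 5}} ∅ t
  else if e = {3, 5} then
    signedIndicator {{0, 1, 5}, {0, 2, 5}, {1, 3, 5}, {2, 4, 5}, {1, 2, 3}}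
      {{1, 2, 4}, {0, 2, 3}, {0, 1, 4}} t
  else if t = insert 0 e then 1
  else 0

def filling : Matrix (Face P2 2) (Face P2 1) ℤ := fun t e => fillingCoeff e.1 t.1

def treeContraction : Matrix (Face P2 1) (Face P2 0) ℤ :=
  fun e v => if e.1 = insert 0 v.1 then 1 else 0

def generator : Face P2 1 → ℤ :=
  fun e => signedIndicator {{0, 4}, {4, 5}} {{0, 5}} e.1

def dualCocycle : Face P2 1 → ℤ :=
  fun e => signedIndicator {{1, 2}, {1, 3}, {4, 5}} {{2, 4}, {3, 5}} e.1

theorem dualCocycle_vecMul_boundaryMatrix : dualCocycle ᵥ* boundaryMatrix P2 1 = 0 := by decide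

theorem boundaryMatrix_mulVec_generator : boundaryMatrix P2 0 *ᵥ generator = 0 := by decide

theorem dualCocycle_dotProduct_generator : dualCocycle ⬝ᵥ generator = 1 := by decide

theorem homotopy : boundaryMatrix P2 1 * filling + treeContraction * boundaryMatrix P2 0 +
    vecMulVec generator dualCocycle = 1 := by
  decide

end P2

/-- The first integral simplicial homology group of `P(2)` is infinite cyclic. -/
theorem P2_homology_one : Nonempty (Homology P2 1 ≃ₗ[ℤ] ℤ) :=
  nonempty_homology_succ_equiv_int_of_homotopy P2.filling P2.treeContraction P2.dualCocycle
    P2.generator P2.dualCocycle_vecMul_boundaryMatrix P2.boundaryMatrix_mulVec_generator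
    P2.dualCocycle_dotProduct_generator P2.homotopy
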